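/- arXiv:1404.0542 — 6 statements merged into one kernel-verified Lean document; each statement's English description precedes it below -/
import Mathlib

section
/- Let T be a rooted tree with n = |N(T)| nodes, let i ∈ N(T), and let C ∈ Trimmed(T) with i ∈ C. Then the number of permutations π of N(T) such that C_i^π ∪ {i} ∈ SameTrim(C,T) equals n! · |adj(C,T)|! · (|C|−1)! / |C ∪ adj(C,T)|!. -/
open scoped Classical

/-- A rooted tree on a finite node set `V`, given by a parent map that fixes the
root and eventually maps every node to the root. -/
structure ReferralTree (V : Type*) [Fintype V] [DecidableEq V] where
  parent : V → V
  root : V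
  parent_root : parent root = root
  reaches_root : ∀ v : V, ∃ k : ℕ, parent^[k] v = root

namespace ReferralTree

variable {V : Type*} [Fintype V] [DecidableEq V]

/-- `anc T i` : the set of ancestors of `i` (nodes on the path from `i` to the
root, excluding `i` itself). -/
noncomputable def anc (T : ReferralTree V) (i : V) : Finset V :=
  Finset.univ.filter (fun j => j ≠ i ∧ ∃ k : ℕ, T.parent^[k] i = j)

/-- `trimN T C` : the node set of the trimmed induced subgraph `T^C_trim`,
i.e. `{i ∈ C : anc(i,T) ⊆ C}`. -/
noncomputable def trimN (T : ReferralTree V) (C : Finset V) : Finset V :=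
  C.filter (fun i => T.anc i ⊆ C)

/-- `C` induces a trimmed subgraph: `N(T^C_trim) = C`. -/
def Trimmed (T : ReferralTree V) (C : Finset V) : Prop :=
  T.trimN C = C

/-- `sameTrim T C` : the coalitions whose trimmed induced subgraph coincides
with that of `C`. -/
noncomputable def sameTrim (T : ReferralTree V) (C : Finset V) : Finset (Finset V) :=
  Finset.univ.filter (fun C' => T.trimN C' = T.trimN C)

/-- Adjacency in the tree `T` (the parent relation, symmetrised). -/
def Adj (T : ReferralTree V) (i j : V) : Prop :=
  i ≠ j ∧ (T.parent i = j ∨ T.parent j = i)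

/-- `adjSet T C` : the nodes outside `C` adjacent in `T` to some node of `C`. -/
noncomputable def adjSet (T : ReferralTree V) (C : Finset V) : Finset V :=
  Finset.univ.filter (fun i => i ∉ C ∧ ∃ j ∈ C, T.Adj i j)

/-- `subtree T i` : the node set `N(T_i)` of the subtree of `T` rooted at `i`,
i.e. `i` together with its descendants. -/
noncomputable def subtree (T : ReferralTree V) (i : V) : Finset V :=
  Finset.univ.filter (fun j => j = i ∨ i ∈ T.anc j)

/-- The depth of a node: the number of its ancestors. -/
noncomputable def depth (T : ReferralTree V) (i : V) : ℕ :=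
  (T.anc i).card

/-- Given an ordering `π` of the nodes (a bijection with `Fin n`), the set
`C_i^π` of nodes preceding `i` in `π`. -/
noncomputable def precSet (π : V ≃ Fin (Fintype.card V)) (i : V) : Finset V :=
  Finset.univ.filter (fun j => π j < π i)

/-- The characteristic function of the tree game `(T,f)`:
`v(C) = f(N(T^C_trim))`. -/
noncomputable def gameValue (T : ReferralTree V) (f : Finset V → ℝ) (C : Finset V) : ℝ :=
  f (T.trimN C)

/-- The marginal contribution `mc(i,C) = v(C ∪ {i}) − v(C)` in the tree game
`(T,f)`. -/
noncomputable def mc (T : ReferralTree V) (f : Finset V → ℝ) (i : V) (C : Finset V) : ℝ :=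
  T.gameValue f (insert i C) - T.gameValue f C

/-- The Shapley value of player `i` in the tree game `(T,f)`:
`Sh_i = (1/n!) Σ_π mc(i, C_i^π)`. -/
noncomputable def shapley (T : ReferralTree V) (f : Finset V → ℝ) (i : V) : ℝ :=
  (1 / ((Fintype.card V).factorial : ℝ)) *
    ∑ π : V ≃ Fin (Fintype.card V), T.mc f i (precSet π i)

/-- The characteristic function `f` of a basic tree game: `f(C) = |C|`. -/
noncomputable def basicF : Finset V → ℝ := fun C => (C.card : ℝ)

end ReferralTree

open ReferralTree

/-!
For trimmed `C ∋ i`, the trimmed subgraph of `D` is `C` exactly when `C ⊆ D` and `D` avoids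
`adj(C,T)`. So `C_i^π ∪ {i} ∈ SameTrim(C,T)` means that `π` puts `C \ {i}` before `i` and
`adj(C,T)` after it. This depends only on the relative order `π` induces on
`M = C ∪ adj(C,T)`. Permuting `M` shows that each of the `|M|!` relative orders is induced by
`n! / |M|!` orderings, and `(|C| - 1)! · |adj(C,T)|!` relative orders have the required shape:
they put `i` at position `|C| - 1` and order the two blocks around it arbitrarily.
-/

open Finset

section RelativeOrder

variable {V β : Type*} [LinearOrder β]

noncomputable def relativeOrder (M : Finset V) (π : V ≃ β) : M ≃ Fin #M :=
  (π.subtypeEquiv fun _ => (mem_map' π.toEmbedding).symm).trans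
    ((M.map π.toEmbedding).orderIsoOfFin (card_map _)).symm.toEquiv

theorem relativeOrder_lt_relativeOrder_iff (M : Finset V) (π : V ≃ β) (x y : M) :
    relativeOrder M π x < relativeOrder M π y ↔ π x < π y := by
  simp [relativeOrder]

theorem compare_relativeOrder (M : Finset V) (π : V ≃ β) (x y : M) :
    compare (relativeOrder M π x) (relativeOrder M π y) = compare (π x) (π y) := by
  simp only [LinearOrder.compare_eq_compareOfLessAndEq, compareOfLessAndEq,
    relativeOrder_lt_relativeOrder_iff, EmbeddingLike.apply_eq_iff_eq, Subtype.ext_iff]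

theorem Equiv.eq_of_forall_lt_iff_lt {γ : Type*} {m : ℕ} {τ τ' : γ ≃ Fin m}
    (h : ∀ x y, τ x < τ y ↔ τ' x < τ' y) : τ = τ' := by
  let e : Fin m ≃o Fin m :=
    { toEquiv := τ.symm.trans τ'
      map_rel_iff' := fun {a b} => by
        simpa [not_lt] using (h (τ.symm b) (τ.symm a)).not.symm }
  have he : e = OrderIso.refl _ := Subsingleton.elim _ _
  ext x
  simpa [e] using (congrArg (fun f => (f (τ x) : ℕ)) he).symm

theorem relativeOrder_ofSubtype_trans [DecidableEq V] (M : Finset V) (σ : Equiv.Perm M)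
    (π : V ≃ β) :
    relativeOrder M ((Equiv.Perm.ofSubtype σ).trans π) = σ.trans (relativeOrder M π) :=
  Equiv.eq_of_forall_lt_iff_lt fun x y => by
    simp [relativeOrder_lt_relativeOrder_iff, Equiv.Perm.ofSubtype_apply_coe]

variable [Fintype V] [DecidableEq V] [Fintype β] [DecidableEq β]

theorem card_filter_relativeOrder_eq_eq (M : Finset V) (τ τ' : M ≃ Fin #M) :
    #{π : V ≃ β | relativeOrder M π = τ} = #{π : V ≃ β | relativeOrder M π = τ'} := by
  let σ : Equiv.Perm M := τ'.trans τ.symm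
  refine card_equiv (Equiv.equivCongr (Equiv.Perm.ofSubtype σ).symm (Equiv.refl β)) fun π => ?_
  have hσ : σ.symm.trans τ' = τ := by ext; simp [σ]
  simp only [mem_filter, mem_univ, true_and]
  rw [show (Equiv.equivCongr _ _) π = (Equiv.Perm.ofSubtype σ).trans π from rfl,
    relativeOrder_ofSubtype_trans, Equiv.trans_cancel_left, hσ]

theorem card_filter_relativeOrder_eq_mul (M : Finset V) (τ : M ≃ Fin #M) :
    #{π : V ≃ β | relativeOrder M π = τ} * (#M).factorial = Fintype.card (V ≃ β) := by
  calc #{π : V ≃ β | relativeOrder M π = τ} * (#M).factorial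
      = ∑ τ' : M ≃ Fin #M, #{π : V ≃ β | relativeOrder M π = τ'} := by
        rw [sum_congr rfl fun τ' _ => card_filter_relativeOrder_eq_eq M τ' τ, sum_const,
          card_univ, Fintype.card_equiv τ, Fintype.card_coe, smul_eq_mul, mul_comm]
    _ = Fintype.card (V ≃ β) := by
        rw [← card_univ, card_eq_sum_card_fiberwise (f := relativeOrder M)
          fun _ _ => mem_coe.2 (mem_univ _)]

theorem card_filter_relativeOrder_mul (M : Finset V) (P : (M ≃ Fin #M) → Prop)
    [DecidablePred P] :
    #{π : V ≃ β | P (relativeOrder M π)} * (#M).factorial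
      = #{τ : M ≃ Fin #M | P τ} * Fintype.card (V ≃ β) := by
  rw [card_eq_sum_card_fiberwise (f := relativeOrder M) (t := {τ | P τ})
      fun π hπ => by simpa using hπ,
    sum_mul, card_eq_sum_ones {τ | P τ}, sum_mul]
  refine sum_congr rfl fun τ hτ => ?_
  rw [one_mul, ← card_filter_relativeOrder_eq_mul M τ, filter_filter]
  congr 1
  exact congrArg card
    (filter_congr fun π _ => and_iff_right_of_imp fun h => h ▸ (mem_filter.1 hτ).2)

end RelativeOrder

section OrderingFibers

theorem Ordering.prod_univ {M : Type*} [CommMonoid M] (f : Ordering → M) :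
    ∏ c, f c = f .lt * f .eq * f .gt := by
  rw [show (univ : Finset Ordering) = {.lt, .eq, .gt} by decide]
  simp [mul_assoc]

theorem Ordering.sum_univ {M : Type*} [AddCommMonoid M] (f : Ordering → M) :
    ∑ c, f c = f .lt + f .eq + f .gt := by
  rw [show (univ : Finset Ordering) = {.lt, .eq, .gt} by decide]
  simp [add_assoc]

variable {α β γ : Type*} [Fintype α]

theorem card_subtype_eq_eq_of_iff {φ : α → Ordering} {j : α} (hφ : ∀ x, φ x = .eq ↔ x = j) :
    Fintype.card {x // φ x = .eq} = 1 := by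
  rw [Fintype.card_congr (Equiv.subtypeEquivRight hφ), Fintype.card_unique]

theorem card_eq_card_lt_add_card_eq_add_card_gt (φ : α → Ordering) :
    Fintype.card α = Fintype.card {x // φ x = .lt} + Fintype.card {x // φ x = .eq}
      + Fintype.card {x // φ x = .gt} := by
  rw [← Ordering.sum_univ (fun c => Fintype.card {x // φ x = c}), ← Fintype.card_sigma,
    Fintype.card_congr (Equiv.sigmaFiberEquiv φ)]

theorem card_subtype_equiv_comp_eq [DecidableEq α] [Fintype β] [DecidableEq β] [Fintype γ]
    [DecidableEq γ]
    {f : α → γ} {g : β → γ} (e₀ : α ≃ β) (he₀ : g ∘ e₀ = f) :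
    Fintype.card {e : α ≃ β // g ∘ e = f} = ∏ c, (Fintype.card {a // f a = c}).factorial := by
  rw [← DomMulAct.stabilizer_card f]
  refine (Fintype.card_congr (Equiv.subtypeEquiv (Equiv.equivCongr (Equiv.refl α) e₀)
    fun h => ?_)).symm
  rw [← he₀]
  rfl

theorem forall_compare_eq_iff_comp_eq {m : ℕ} (τ : α ≃ Fin m) {f : α → Ordering} {i : α}
    (hf : ∀ x, f x = .eq ↔ x = i) (hb : Fintype.card {x // f x = .lt} < m) :
    (∀ x, compare (τ x) (τ i) = f x) ↔
      (compare · ⟨Fintype.card {x // f x = .lt}, hb⟩) ∘ τ = f := by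
  constructor
  · intro H
    -- the elements `τ` puts below `i` are exactly the fibre of `f` over `lt`
    have hτi : τ i = ⟨_, hb⟩ := by
      refine Fin.ext ?_
      calc (τ i : ℕ) = Fintype.card {k : Fin m // k < τ i} := by
            rw [Fintype.card_subtype, filter_gt_eq_Iio, Fin.card_Iio]
        _ = Fintype.card {x // τ x < τ i} :=
            (Fintype.card_congr (τ.subtypeEquiv fun _ => Iff.rfl)).symm
        _ = Fintype.card {x // f x = .lt} := Fintype.card_congr
            (Equiv.subtypeEquivRight fun x => by rw [← H x, compare_lt_iff_lt])
    funext x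
    simp [← hτi, H x]
  · intro H x
    have hτi : τ i = ⟨_, hb⟩ := compare_eq_iff_eq.1 ((congrFun H i).trans ((hf i).2 rfl))
    rw [hτi]
    exact congrFun H x

theorem card_filter_forall_compare_eq [DecidableEq α] {m : ℕ} (hm : Fintype.card α = m)
    (f : α → Ordering) (i : α) (hf : ∀ x, f x = .eq ↔ x = i) :
    #{τ : α ≃ Fin m | ∀ x, compare (τ x) (τ i) = f x}
      = (Fintype.card {x // f x = .lt}).factorial * (Fintype.card {x // f x = .gt}).factorial := by
  subst hm
  set b := Fintype.card {x // f x = .lt}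
  have hb : b < Fintype.card α := Fintype.card_subtype_lt (x := i) (by simp [(hf i).2 rfl])
  let g : Fin (Fintype.card α) → Ordering := fun k => compare k ⟨b, hb⟩
  have hcard_eq := card_subtype_eq_eq_of_iff hf
  have hfib : ∀ c, Fintype.card {x // f x = c} = Fintype.card {k // g k = c} := by
    have hlt : Fintype.card {k // g k = .lt} = b := by
      rw [Fintype.card_congr (Equiv.subtypeEquivRight fun k => compare_lt_iff_lt),
        Fintype.card_subtype, filter_gt_eq_Iio, Fin.card_Iio]
    have heq : Fintype.card {k // g k = .eq} = 1 :=
      card_subtype_eq_eq_of_iff (j := ⟨b, hb⟩) fun _ => compare_eq_iff_eq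
    have hα := card_eq_card_lt_add_card_eq_add_card_gt f
    have hfin := card_eq_card_lt_add_card_eq_add_card_gt g
    rw [Fintype.card_fin] at hfin
    intro c
    cases c <;> omega
  rw [← Fintype.card_subtype,
    Fintype.card_congr (Equiv.subtypeEquivRight fun τ => forall_compare_eq_iff_comp_eq τ hf hb),
    card_subtype_equiv_comp_eq (Equiv.ofFiberEquiv fun c => Fintype.equivOfCardEq (hfib c))
      (funext (Equiv.ofFiberEquiv_map _)), Ordering.prod_univ, hcard_eq, Nat.factorial_one,
    mul_one]

end OrderingFibers

theorem card_filter_forall_compare_eq_mul {V β : Type*} [Fintype V] [DecidableEq V]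
    [LinearOrder β] [Fintype β] [DecidableEq β] {M : Finset V} {i : V} (hi : i ∈ M)
    (f : M → Ordering) (hf : ∀ x, f x = .eq ↔ x = ⟨i, hi⟩) :
    #{π : V ≃ β | ∀ x : M, compare (π x) (π i) = f x} * (#M).factorial
      = (Fintype.card {x // f x = .lt}).factorial * (Fintype.card {x // f x = .gt}).factorial
        * Fintype.card (V ≃ β) := by
  simp only [← compare_relativeOrder M _ _ ⟨i, hi⟩]
  rw [card_filter_relativeOrder_mul M (fun τ => ∀ x, compare (τ x) (τ ⟨i, hi⟩) = f x),
    card_filter_forall_compare_eq (Fintype.card_coe M) f ⟨i, hi⟩ hf]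

theorem card_filter_forall_lt_and_forall_lt_mul {V β : Type*} [Fintype V] [DecidableEq V]
    [LinearOrder β] [Fintype β] [DecidableEq β] (i : V) {B A : Finset V}
    (hiB : i ∉ B) (hiA : i ∉ A) (hBA : Disjoint B A) :
    #{π : V ≃ β | (∀ x ∈ B, π x < π i) ∧ ∀ y ∈ A, π i < π y} * (#B + #A + 1).factorial
      = (#B).factorial * (#A).factorial * Fintype.card (V ≃ β) := by
  set M := insert i (B ∪ A)
  have hiM : i ∈ M := mem_insert_self _ _
  have hBM : B ⊆ M := subset_union_left.trans (subset_insert _ _)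
  have hAM : A ⊆ M := subset_union_right.trans (subset_insert _ _)
  have hM : #M = #B + #A + 1 := by
    rw [card_insert_of_notMem (by simp [hiB, hiA]), card_union_of_disjoint hBA]
  let f : M → Ordering := fun x => if x.1 ∈ B then .lt else if x.1 ∈ A then .gt else .eq
  have hf_lt : ∀ x, f x = .lt ↔ x.1 ∈ B := fun x => by
    by_cases hB : x.1 ∈ B <;> by_cases hA : x.1 ∈ A <;> simp [f, hB, hA]
  have hf_gt : ∀ x, f x = .gt ↔ x.1 ∈ A := fun x => by
    by_cases hA : x.1 ∈ A
    · simp [f, hA, disjoint_right.1 hBA hA]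
    · by_cases hB : x.1 ∈ B <;> simp [f, hB, hA]
  have hf_eq : ∀ x, f x = .eq ↔ x = ⟨i, hiM⟩ := fun x => by
    obtain ⟨x, hx⟩ := x
    rcases mem_insert.1 hx with rfl | hx
    · simp [f, hiB, hiA]
    · have hxi : x ≠ i := by rintro rfl; simp_all
      rcases mem_union.1 hx with hB | hA
      · simp [f, hB, hxi]
      · simp [f, hA, hxi, disjoint_right.1 hBA hA]
  have hgood : ∀ π : V ≃ β, ((∀ x ∈ B, π x < π i) ∧ ∀ y ∈ A, π i < π y) ↔
      ∀ x : M, compare (π x) (π i) = f x := by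
    refine fun π => ⟨fun ⟨hB, hA⟩ x => ?_, fun H => ⟨fun x hx => ?_, fun y hy => ?_⟩⟩
    · cases hfx : f x
      · exact compare_lt_iff_lt.2 (hB _ ((hf_lt x).1 hfx))
      · simp [(hf_eq x).1 hfx]
      · exact compare_gt_iff_gt.2 (hA _ ((hf_gt x).1 hfx))
    · exact compare_lt_iff_lt.1 ((H ⟨x, hBM hx⟩).trans ((hf_lt _).2 hx))
    · exact compare_gt_iff_gt.1 ((H ⟨y, hAM hy⟩).trans ((hf_gt _).2 hy))
  rw [filter_congr fun π _ => hgood π, ← hM, card_filter_forall_compare_eq_mul hiM f hf_eq,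
    Fintype.card_congr ((Equiv.subtypeEquivRight hf_lt).trans
      (Equiv.subtypeSubtypeEquivSubtype (hBM ·))),
    Fintype.card_congr ((Equiv.subtypeEquivRight hf_gt).trans
      (Equiv.subtypeSubtypeEquivSubtype (hAM ·))),
    Fintype.card_coe, Fintype.card_coe]

namespace ReferralTree

variable {V : Type*} [Fintype V] [DecidableEq V] (T : ReferralTree V)

theorem mem_anc {x j : V} : x ∈ T.anc j ↔ x ≠ j ∧ ∃ k, T.parent^[k] j = x := by
  simp [anc]

theorem mem_adjSet {C : Finset V} {x : V} : x ∈ T.adjSet C ↔ x ∉ C ∧ ∃ j ∈ C, T.Adj x j := by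
  simp [adjSet]

theorem disjoint_adjSet (C : Finset V) : Disjoint C (T.adjSet C) :=
  disjoint_right.2 fun _ hx => ((T.mem_adjSet).1 hx).1

theorem anc_subset_insert_anc_parent (j : V) :
    T.anc j ⊆ insert (T.parent j) (T.anc (T.parent j)) := by
  intro x hx
  obtain ⟨hxj, k, rfl⟩ := (T.mem_anc).1 hx
  cases k with
  | zero => exact absurd rfl hxj
  | succ k =>
    rw [Function.iterate_succ_apply, mem_insert, T.mem_anc]
    exact (em _).imp_right fun h => ⟨h, k, rfl⟩

variable {T} {C : Finset V}

theorem Trimmed.anc_subset (hC : T.Trimmed C) {j : V} (hj : j ∈ C) : T.anc j ⊆ C :=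
  filter_eq_self.1 hC j hj

theorem Trimmed.root_mem (hC : T.Trimmed C) {i : V} (hi : i ∈ C) : T.root ∈ C := by
  by_cases h : i = T.root
  · exact h ▸ hi
  · exact hC.anc_subset hi ((T.mem_anc).2 ⟨Ne.symm h, T.reaches_root i⟩)

theorem Trimmed.trimN_eq_iff (hC : T.Trimmed C) (hroot : T.root ∈ C) (D : Finset V) :
    T.trimN D = C ↔ C ⊆ D ∧ Disjoint (T.adjSet C) D := by
  constructor
  · rintro rfl
    refine ⟨filter_subset _ _, disjoint_left.2 fun x hx hxD => ?_⟩
    obtain ⟨hxC, j, hjC, hxj, hpx | hpj⟩ := (T.mem_adjSet).1 hx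
    · have hanc : T.anc x ⊆ T.trimN D := by
        refine (T.anc_subset_insert_anc_parent x).trans (insert_subset ?_ ?_) <;> rw [hpx]
        exacts [hjC, hC.anc_subset hjC]
      exact hxC (mem_filter.2 ⟨hxD, hanc.trans (filter_subset _ _)⟩)
    · exact hxC (hC.anc_subset hjC ((T.mem_anc).2 ⟨hxj, 1, hpj⟩))
  · rintro ⟨hCD, hdisj⟩
    refine Subset.antisymm (fun j hj => ?_)
      fun j hj => mem_filter.2 ⟨hCD hj, (hC.anc_subset hj).trans hCD⟩
    obtain ⟨hjD, hancD⟩ := mem_filter.1 hj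
    by_contra hjC
    -- the last node outside `C` on the path from `j` to the root lies in `adj(C,T) ∩ D`
    obtain ⟨k, hkC, hk1C⟩ := Nat.exists_not_and_succ_of_not_zero_of_exists
      (p := (T.parent^[·] j ∈ C)) hjC (let ⟨k, hk⟩ := T.reaches_root j; ⟨k, hk ▸ hroot⟩)
    rw [Function.iterate_succ_apply'] at hk1C
    have hxD : T.parent^[k] j ∈ D := by
      by_cases hxj : T.parent^[k] j = j
      · rwa [hxj]
      · exact hancD ((T.mem_anc).2 ⟨hxj, k, rfl⟩)
    have hx : T.parent^[k] j ∈ T.adjSet C :=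
      (T.mem_adjSet).2 ⟨hkC, _, hk1C, fun h => hkC (h ▸ hk1C), Or.inl rfl⟩
    exact disjoint_left.1 hdisj hx hxD

theorem Trimmed.insert_precSet_mem_sameTrim_iff (hC : T.Trimmed C) {i : V} (hi : i ∈ C)
    (π : V ≃ Fin (Fintype.card V)) :
    insert i (precSet π i) ∈ T.sameTrim C ↔
      (∀ x ∈ C.erase i, π x < π i) ∧ ∀ y ∈ T.adjSet C, π i < π y := by
  have hiA : i ∉ T.adjSet C := disjoint_left.1 (T.disjoint_adjSet C) hi
  rw [sameTrim, mem_filter, show T.trimN C = C from hC, hC.trimN_eq_iff (hC.root_mem hi),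
    subset_insert_iff, disjoint_insert_right]
  simp only [mem_univ, true_and, hiA, not_false_eq_true, subset_iff, disjoint_left, precSet,
    mem_filter, not_lt]
  exact and_congr_right' (forall₂_congr fun y hy =>
    (π.injective.ne (ne_of_mem_of_not_mem hy hiA).symm).le_iff_lt)

end ReferralTree

/-- For `C ∈ Trimmed(T)` with `i ∈ C`, the number of permutations
`π` of `N(T)` with `C_i^π ∪ {i} ∈ SameTrim(C,T)` equals
`n! · |adj(C,T)|! · (|C|−1)! / |C ∪ adj(C,T)|!`. -/
theorem stmt6 {V : Type*} [Fintype V] [DecidableEq V] (T : ReferralTree V)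
    (i : V) (C : Finset V) (hC : T.Trimmed C) (hi : i ∈ C) :
    (((Finset.univ : Finset (V ≃ Fin (Fintype.card V))).filter
        (fun π => insert i (precSet π i) ∈ T.sameTrim C)).card : ℝ)
      = ((Fintype.card V).factorial * (T.adjSet C).card.factorial *
            (C.card - 1).factorial : ℝ) /
          ((C ∪ T.adjSet C).card.factorial : ℝ) := by
  have hdisj := T.disjoint_adjSet C
  have hcount := card_filter_forall_lt_and_forall_lt_mul (β := Fin (Fintype.card V)) i
    (notMem_erase i C) (disjoint_left.1 hdisj hi) (hdisj.mono_left (erase_subset i C))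
  rw [Fintype.card_equiv (Fintype.equivFin V)] at hcount
  have hcard : #(C ∪ T.adjSet C) = #(C.erase i) + #(T.adjSet C) + 1 := by
    rw [card_union_of_disjoint hdisj, ← card_erase_add_one hi]
    ring
  rw [filter_congr fun π _ => hC.insert_precSet_mem_sameTrim_iff hi π,
    eq_div_iff (by positivity), hcard, ← card_erase_of_mem hi]
  exact_mod_cast hcount.trans (by ring)
end

section
/- Let (T,f) be a tree game, let i ∈ N(T), and let C ∈ Trimmed(T) with i ∈ C. Then the marginal contribution of i to C\{i} satisfies mc(i, C\{i}) = f(C) − f(C \ N(T_i)), where T_i is the subtree of T rooted at i. -/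
open scoped Classical

open ReferralTree

/-- In a tree game `(T,f)`, for `C ∈ Trimmed(T)` with `i ∈ C`,
`mc(i, C \ {i}) = f(C) − f(C \ N(T_i))`. -/
theorem stmt8 {V : Type*} [Fintype V] [DecidableEq V] (T : ReferralTree V)
    (f : Finset V → ℝ) (hf : f ∅ = 0) (i : V) (C : Finset V)
    (hC : T.Trimmed C) (hi : i ∈ C) :
    T.mc f i (C \ {i}) = f C - f (C \ T.subtree i) := by
  have hanc : ∀ j ∈ C, T.anc j ⊆ C := by
    intro j hj
    rw [← hC] at hj
    exact (Finset.mem_filter.mp hj).2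
  have h1 : insert i (C \ {i}) = C := by
    ext x
    simp only [Finset.mem_insert, Finset.mem_sdiff, Finset.mem_singleton]
    constructor
    · rintro (rfl | ⟨hx, _⟩) <;> [exact hi; exact hx]
    · intro hx
      by_cases hxi : x = i
      · exact Or.inl hxi
      · exact Or.inr ⟨hx, hxi⟩
  have h2 : T.trimN (C \ {i}) = C \ T.subtree i := by
    ext j
    simp only [trimN, subtree, Finset.mem_filter, Finset.mem_sdiff, Finset.mem_singleton,
      Finset.mem_univ, true_and]
    constructor
    · rintro ⟨⟨hjC, hji⟩, hsub⟩
      refine ⟨hjC, ?_⟩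
      rintro (rfl | hia)
      · exact hji rfl
      · exact (Finset.mem_sdiff.mp (hsub hia)).2 (Finset.mem_singleton.mpr rfl)
    · rintro ⟨hjC, hns⟩
      push_neg at hns
      refine ⟨⟨hjC, hns.1⟩, ?_⟩
      intro x hx
      exact Finset.mem_sdiff.mpr ⟨hanc j hjC hx,
        by simp only [Finset.mem_singleton]; rintro rfl; exact hns.2 hx⟩
  simp only [mc, gameValue, h1, h2]
  rw [show T.trimN C = C from hC]
end

section
/- Let (T,f) be a basic tree game. For every node i ∈ N(T) and every coalition C ⊆ N(T)\{i}, the marginal contribution of i to C satisfies mc(i,C) = | N(T^{C∪{i}}_trim) ∩ N(T_i) |, where T_i is the subtree of T rooted at i. -/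
open scoped Classical

open ReferralTree

/-- In a basic tree game, for `i ∉ C`,
`mc(i,C) = |N(T^{C∪{i}}_trim) ∩ N(T_i)|`. -/
theorem stmt10 {V : Type*} [Fintype V] [DecidableEq V] (T : ReferralTree V)
    (i : V) (C : Finset V) (hi : i ∉ C) :
    T.mc basicF i C = ((T.trimN (insert i C) ∩ T.subtree i).card : ℝ) := by
  classical
  have hmem : ∀ (D : Finset V) (j : V), j ∈ T.trimN D ↔ j ∈ D ∧ T.anc j ⊆ D := by
    intro D j; simp [trimN]
  have hst : ∀ j, j ∈ T.subtree i ↔ j = i ∨ i ∈ T.anc j := by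
    intro j; simp [subtree]
  have hdisj : Disjoint (T.trimN C) (T.trimN (insert i C) ∩ T.subtree i) := by
    rw [Finset.disjoint_left]
    intro j hj hj2
    obtain ⟨hjC, hancC⟩ := (hmem C j).1 hj
    rcases (hst j).1 (Finset.mem_inter.1 hj2).2 with rfl | hia
    · exact hi hjC
    · exact hi (hancC hia)
  have hunion : T.trimN (insert i C) = T.trimN C ∪ (T.trimN (insert i C) ∩ T.subtree i) := by
    ext j
    simp only [Finset.mem_union, Finset.mem_inter, hmem]
    constructor
    · rintro ⟨hj, hanc⟩
      by_cases hs : j ∈ T.subtree i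
      · exact Or.inr ⟨⟨hj, hanc⟩, hs⟩
      · left
        rw [hst] at hs
        push_neg at hs
        refine ⟨(Finset.mem_insert.1 hj).resolve_left hs.1, fun x hx => ?_⟩
        rcases Finset.mem_insert.1 (hanc hx) with rfl | h
        · exact absurd hx hs.2
        · exact h
    · rintro (⟨hj, hanc⟩ | ⟨⟨hj, hanc⟩, _⟩)
      · exact ⟨Finset.mem_insert_of_mem hj, fun x hx => Finset.mem_insert_of_mem (hanc hx)⟩
      · exact ⟨hj, hanc⟩
  have hcard : (T.trimN (insert i C)).card
      = (T.trimN C).card + (T.trimN (insert i C) ∩ T.subtree i).card := by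
    conv_lhs => rw [hunion]
    exact Finset.card_union_of_disjoint hdisj
  simp only [mc, gameValue, basicF]
  rw [hcard]
  push_cast
  ring
end

section
/- Every basic tree game is a convex game: its characteristic function v is supermodular, i.e., v(C ∪ C') + v(C ∩ C') ≥ v(C) + v(C') for all coalitions C, C' ⊆ N(T). -/
open scoped Classical

open ReferralTree

/-- A basic tree game is convex: its characteristic function is
supermodular. -/
theorem stmt11 {V : Type*} [Fintype V] [DecidableEq V] (T : ReferralTree V)
    (C C' : Finset V) :
    T.gameValue basicF C + T.gameValue basicF C'
      ≤ T.gameValue basicF (C ∪ C') + T.gameValue basicF (C ∩ C') := by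
  have hinter : T.trimN C ∩ T.trimN C' = T.trimN (C ∩ C') := by
    ext i
    simp only [trimN, Finset.mem_inter, Finset.mem_filter, Finset.subset_inter_iff]
    tauto
  have hunion : T.trimN C ∪ T.trimN C' ⊆ T.trimN (C ∪ C') := by
    intro i hi
    simp only [trimN, Finset.mem_union, Finset.mem_filter] at hi ⊢
    rcases hi with ⟨h1, h2⟩ | ⟨h1, h2⟩
    · exact ⟨Or.inl h1, h2.trans Finset.subset_union_left⟩
    · exact ⟨Or.inr h1, h2.trans Finset.subset_union_right⟩
  have hcard : (T.trimN C).card + (T.trimN C').card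
      ≤ (T.trimN (C ∪ C')).card + (T.trimN (C ∩ C')).card := by
    calc (T.trimN C).card + (T.trimN C').card
        = (T.trimN C ∪ T.trimN C').card + (T.trimN C ∩ T.trimN C').card :=
          (Finset.card_union_add_card_inter _ _).symm
      _ ≤ (T.trimN (C ∪ C')).card + (T.trimN (C ∩ C')).card := by
          rw [hinter]; exact Nat.add_le_add_right (Finset.card_le_card hunion) _
  simpa [gameValue, basicF] using (Nat.cast_le (α := ℝ)).mpr hcard
end

section
/- In a basic tree game with characteristic function v on player set N(T), for every pair of coalitions C, C' ⊆ N(T) with C ⊂ C' and every player i ∉ C', the marginal contributions satisfy mc(i,C) ≤ mc(i,C'). -/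
open scoped Classical

open ReferralTree

lemma mem_trimN {V : Type*} [Fintype V] [DecidableEq V] {T : ReferralTree V}
    {C : Finset V} {j : V} : j ∈ T.trimN C ↔ j ∈ C ∧ T.anc j ⊆ C := by
  simp [ReferralTree.trimN]

lemma trimN_mono {V : Type*} [Fintype V] [DecidableEq V] (T : ReferralTree V)
    {C C' : Finset V} (h : C ⊆ C') : T.trimN C ⊆ T.trimN C' := by
  intro j hj
  rw [mem_trimN] at hj ⊢
  exact ⟨h hj.1, hj.2.trans h⟩

lemma mem_diff_trimN {V : Type*} [Fintype V] [DecidableEq V] (T : ReferralTree V)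
    {C : Finset V} {i : V} (hi : i ∉ C) {j : V} :
    j ∈ T.trimN (insert i C) \ T.trimN C ↔
      j ∈ insert i C ∧ T.anc j ⊆ insert i C ∧ (j = i ∨ i ∈ T.anc j) := by
  simp only [Finset.mem_sdiff, mem_trimN]
  constructor
  · rintro ⟨⟨h1, h2⟩, h3⟩
    refine ⟨h1, h2, ?_⟩
    by_cases hji : j = i
    · exact Or.inl hji
    · right
      have hjC : j ∈ C := (Finset.mem_insert.mp h1).resolve_left hji
      have : ¬ T.anc j ⊆ C := fun hsub => h3 ⟨hjC, hsub⟩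
      obtain ⟨a, ha, haC⟩ := Finset.not_subset.mp this
      rcases Finset.mem_insert.mp (h2 ha) with h | h
      · exact h ▸ ha
      · exact absurd h haC
  · rintro ⟨h1, h2, h3⟩
    refine ⟨⟨h1, h2⟩, ?_⟩
    rintro ⟨hjC, hsub⟩
    rcases h3 with rfl | h
    · exact hi hjC
    · exact hi (hsub h)

/-- In a basic tree game, for `C ⊂ C'` and `i ∉ C'`,
`mc(i,C) ≤ mc(i,C')`. -/
theorem stmt12 {V : Type*} [Fintype V] [DecidableEq V] (T : ReferralTree V)
    (C C' : Finset V) (hss : C ⊂ C') (i : V) (hi : i ∉ C') :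
    T.mc basicF i C ≤ T.mc basicF i C' := by
  have hiC : i ∉ C := fun h => hi (hss.subset h)
  have key : ∀ (D : Finset V), i ∉ D →
      T.mc basicF i D = ((T.trimN (insert i D) \ T.trimN D).card : ℝ) := by
    intro D hD
    have hsub : T.trimN D ⊆ T.trimN (insert i D) :=
      trimN_mono T (Finset.subset_insert i D)
    simp only [ReferralTree.mc, ReferralTree.gameValue, basicF,
      Finset.card_sdiff_of_subset hsub]
    have hle : (T.trimN D).card ≤ (T.trimN (insert i D)).card :=
      Finset.card_le_card hsub
    push_cast [Nat.cast_sub hle]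
    ring
  rw [key C hiC, key C' hi]
  have hmono : T.trimN (insert i C) \ T.trimN C ⊆ T.trimN (insert i C') \ T.trimN C' := by
    intro j hj
    rw [mem_diff_trimN T hiC] at hj
    rw [mem_diff_trimN T hi]
    have hins : insert i C ⊆ insert i C' := Finset.insert_subset_insert i hss.subset
    exact ⟨hins hj.1, hj.2.1.trans hins, hj.2.2⟩
  exact_mod_cast Finset.card_le_card hmono
end

section
/- In a basic tree game, the Shapley payoff vector (Sh_1, …, Sh_n) lies in the core: Σ_{i ∈ N(T)} Sh_i = v(N(T)) and Σ_{i ∈ C} Sh_i ≥ v(C) for every coalition C ⊆ N(T). -/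
open scoped Classical

namespace ReferralTree

variable {V : Type*} [Fintype V] [DecidableEq V]

/-- The path from `j` to the root: `j` together with its ancestors. -/
noncomputable def path (T : ReferralTree V) (j : V) : Finset V := insert j (T.anc j)

lemma mem_path_self (T : ReferralTree V) (j : V) : j ∈ T.path j :=
  Finset.mem_insert_self _ _

lemma trim_eq (T : ReferralTree V) (C : Finset V) :
    T.trimN C = Finset.univ.filter (fun j => T.path j ⊆ C) := by
  ext j
  simp [trimN, path, Finset.insert_subset_iff]

lemma val_eq (T : ReferralTree V) (C : Finset V) :
    T.gameValue basicF C = ∑ j : V, (if T.path j ⊆ C then (1:ℝ) else 0) := by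
  rw [gameValue, basicF, trim_eq, Finset.card_filter]
  push_cast
  rfl

lemma path_image_nonempty (T : ReferralTree V) (π : V ≃ Fin (Fintype.card V)) (j : V) :
    ((T.path j).image π).Nonempty :=
  Finset.image_nonempty.2 ⟨j, T.mem_path_self j⟩

/-- The last element of `path j` in the ordering `π`. -/
noncomputable def maxE (T : ReferralTree V) (π : V ≃ Fin (Fintype.card V)) (j : V) : V :=
  π.symm (((T.path j).image π).max' (T.path_image_nonempty π j))

lemma maxE_mem (T : ReferralTree V) (π : V ≃ Fin (Fintype.card V)) (j : V) :
    T.maxE π j ∈ T.path j := by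
  have h := Finset.max'_mem ((T.path j).image π) (T.path_image_nonempty π j)
  rcases Finset.mem_image.1 h with ⟨k, hk, hπk⟩
  rw [maxE, ← hπk, Equiv.symm_apply_apply]
  exact hk

lemma le_maxE (T : ReferralTree V) (π : V ≃ Fin (Fintype.card V)) (j k : V)
    (hk : k ∈ T.path j) : π k ≤ π (T.maxE π j) := by
  rw [maxE, Equiv.apply_symm_apply]
  exact Finset.le_max' _ _ (Finset.mem_image_of_mem _ hk)

lemma mem_precSet (π : V ≃ Fin (Fintype.card V)) (i j : V) :
    j ∈ precSet π i ↔ π j < π i := by simp [precSet]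

lemma key (T : ReferralTree V) (π : V ≃ Fin (Fintype.card V)) (i j : V) :
    (T.path j ⊆ insert i (precSet π i) ∧ ¬ T.path j ⊆ precSet π i) ↔ i = T.maxE π j := by
  constructor
  · rintro ⟨hA, hB⟩
    obtain ⟨k, hk, hkC⟩ := Finset.not_subset.1 hB
    have hki : k = i := by
      rcases Finset.mem_insert.1 (hA hk) with h | h
      · exact h
      · exact absurd h hkC
    subst hki
    have h1 : π (T.maxE π j) ≤ π k := by
      rcases Finset.mem_insert.1 (hA (T.maxE_mem π j)) with h | h
      · rw [h]
      · exact le_of_lt ((mem_precSet π k _).1 h)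
    have h2 := T.le_maxE π j k hk
    exact π.injective (le_antisymm h2 h1)
  · rintro rfl
    constructor
    · intro k hk
      rcases eq_or_ne k (T.maxE π j) with h | h
      · rw [h]; exact Finset.mem_insert_self _ _
      · have hle := T.le_maxE π j k hk
        have hne : π k ≠ π (T.maxE π j) := fun he => h (π.injective he)
        exact Finset.mem_insert_of_mem ((mem_precSet π _ k).2 (lt_of_le_of_ne hle hne))
    · intro hsub
      have := (mem_precSet π _ _).1 (hsub (T.maxE_mem π j))
      exact absurd this (lt_irrefl _)

lemma mc_eq (T : ReferralTree V) (π : V ≃ Fin (Fintype.card V)) (i : V) :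
    T.mc basicF i (precSet π i) = ∑ j : V, (if i = T.maxE π j then (1:ℝ) else 0) := by
  rw [mc, val_eq, val_eq, ← Finset.sum_sub_distrib]
  refine Finset.sum_congr rfl fun j _ => ?_
  have hBA : T.path j ⊆ precSet π i → T.path j ⊆ insert i (precSet π i) :=
    fun h => h.trans (Finset.subset_insert _ _)
  by_cases h : i = T.maxE π j
  · obtain ⟨hA, hB⟩ := (T.key π i j).2 h
    rw [if_pos hA, if_neg hB, if_pos h]
    norm_num
  · have hnk : ¬ (T.path j ⊆ insert i (precSet π i) ∧ ¬ T.path j ⊆ precSet π i) :=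
      fun hc => h ((T.key π i j).1 hc)
    rw [if_neg h]
    by_cases hB : T.path j ⊆ precSet π i
    · simp [hB, hBA hB]
    · have hA : ¬ T.path j ⊆ insert i (precSet π i) := fun hA => hnk ⟨hA, hB⟩
      simp [hA, hB]

end ReferralTree

open ReferralTree

/-- In a basic tree game, the Shapley payoff vector lies in the
core: it is efficient and no coalition can improve upon it. -/
theorem stmt13 {V : Type*} [Fintype V] [DecidableEq V] (T : ReferralTree V) :
    (∑ i : V, T.shapley basicF i = T.gameValue basicF Finset.univ) ∧
      ∀ C : Finset V, T.gameValue basicF C ≤ ∑ i ∈ C, T.shapley basicF i := by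
  have hcard : (Fintype.card (V ≃ Fin (Fintype.card V)) : ℝ)
      = ((Fintype.card V).factorial : ℝ) := by
    rw [Fintype.card_equiv (Fintype.equivFin V)]
  have hFpos : (0:ℝ) < ((Fintype.card V).factorial : ℝ) := by positivity
  have hF : ((Fintype.card V).factorial : ℝ) ≠ 0 := ne_of_gt hFpos
  constructor
  · -- efficiency
    have hvuniv : T.gameValue basicF Finset.univ = (Fintype.card V : ℝ) := by
      rw [val_eq]
      simp
    have hsum : ∑ i : V, ∑ π : V ≃ Fin (Fintype.card V), T.mc basicF i (precSet π i)
        = ((Fintype.card V).factorial : ℝ) * (Fintype.card V : ℝ) := by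
      rw [Finset.sum_comm]
      have h1 : ∀ π : V ≃ Fin (Fintype.card V),
          ∑ i : V, T.mc basicF i (precSet π i) = (Fintype.card V : ℝ) := by
        intro π
        simp only [mc_eq]
        rw [Finset.sum_comm]
        have h2 : ∀ j : V, ∑ i : V, (if i = T.maxE π j then (1:ℝ) else 0) = 1 := by
          intro j
          rw [Finset.sum_ite_eq']
          simp
        simp [h2, Finset.card_univ]
      rw [Finset.sum_congr rfl fun π _ => h1 π, Finset.sum_const, Finset.card_univ,
        nsmul_eq_mul, hcard]
    rw [hvuniv]
    simp only [shapley]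
    rw [← Finset.mul_sum, hsum]
    field_simp
  · -- core inequalities
    intro C
    have hπ : ∀ π : V ≃ Fin (Fintype.card V),
        T.gameValue basicF C ≤ ∑ i ∈ C, T.mc basicF i (precSet π i) := by
      intro π
      simp only [mc_eq]
      rw [Finset.sum_comm]
      rw [val_eq]
      apply Finset.sum_le_sum
      intro j _
      rw [Finset.sum_ite_eq']
      split_ifs with h1 h2
      · norm_num
      · exact absurd (h1 (T.maxE_mem π j)) h2
      · norm_num
      · norm_num
    have hsum : ((Fintype.card V).factorial : ℝ) * T.gameValue basicF C
        ≤ ∑ π : V ≃ Fin (Fintype.card V), ∑ i ∈ C, T.mc basicF i (precSet π i) := by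
      calc ((Fintype.card V).factorial : ℝ) * T.gameValue basicF C
          = ∑ _π : V ≃ Fin (Fintype.card V), T.gameValue basicF C := by
            rw [Finset.sum_const, Finset.card_univ, nsmul_eq_mul, hcard]
        _ ≤ _ := Finset.sum_le_sum fun π _ => hπ π
    simp only [shapley]
    rw [← Finset.mul_sum, Finset.sum_comm]
    calc T.gameValue basicF C
        = (1 / ((Fintype.card V).factorial : ℝ)) *
            (((Fintype.card V).factorial : ℝ) * T.gameValue basicF C) := by
          field_simp
      _ ≤ _ := by
          apply mul_le_mul_of_nonneg_left hsum
          positivity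
end
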